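/- arXiv:1910.10612 — 8 statements merged into one kernel-verified Lean document; each statement's English description precedes it below -/
import Mathlib

section
/- For every finite simple graph G and every vertex v of G, there exists a finite sequence of vertices v_1, …, v_m such that v is an isolated vertex of the graph μ_{v_m}(μ_{v_{m−1}}(⋯ μ_{v_1}(G) ⋯)) obtained by successively applying the mutations μ_{v_1}, …, μ_{v_m} to G. -/
open Classical Finset

noncomputable section

/-- The mutation `μ_v(G)` of a graph `G` at a vertex `v`: edges not incident to `v`
are those of `G`; edges incident to `v` are the pairs `vw` with `w ≠ v`, `w ∉ N_G(v)`. -/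
def mutation {V : Type*} (G : SimpleGraph V) (v : V) : SimpleGraph V where
  Adj x y := x ≠ y ∧
    ((x = v ∧ ¬ G.Adj v y) ∨ (y = v ∧ ¬ G.Adj v x) ∨ (x ≠ v ∧ y ≠ v ∧ G.Adj x y))
  symm := by
    constructor
    rintro x y ⟨hxy, h | h | ⟨h1, h2, h3⟩⟩
    · exact ⟨hxy.symm, Or.inr (Or.inl h)⟩
    · exact ⟨hxy.symm, Or.inl h⟩
    · exact ⟨hxy.symm, Or.inr (Or.inr ⟨h2, h1, h3.symm⟩)⟩
  loopless := by
    constructor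
    rintro x ⟨hxx, -⟩
    exact hxx rfl

/-- The relative mutation `μ_{v←u}(G)` of `G` at `v` with respect to `u`: edges not
incident to `v` are those of `G`; edges incident to `v` are the pairs `vw` with
`w ≠ v` and `w` in the symmetric difference `N_G(u) Δ N_G(v)`. -/
def relMutation {V : Type*} (G : SimpleGraph V) (v u : V) : SimpleGraph V where
  Adj x y := x ≠ y ∧
    ((x = v ∧ (G.Adj u y ↔ ¬ G.Adj v y)) ∨ (y = v ∧ (G.Adj u x ↔ ¬ G.Adj v x)) ∨
      (x ≠ v ∧ y ≠ v ∧ G.Adj x y))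
  symm := by
    constructor
    rintro x y ⟨hxy, h | h | ⟨h1, h2, h3⟩⟩
    · exact ⟨hxy.symm, Or.inr (Or.inl h)⟩
    · exact ⟨hxy.symm, Or.inl h⟩
    · exact ⟨hxy.symm, Or.inr (Or.inr ⟨h2, h1, h3.symm⟩)⟩
  loopless := by
    constructor
    rintro x ⟨hxx, -⟩
    exact hxx rfl

/-- A vertex is isolated if it has no neighbors. -/
def isIsolated {V : Type*} (G : SimpleGraph V) (v : V) : Prop := ∀ w, ¬ G.Adj v w

/-- `pairGraph a b` is the graph `G(a,b)` on `2a+b` vertices consisting of `a`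
pairwise disjoint edges `{0,1}, {2,3}, …` together with `b` isolated vertices. -/
def pairGraph (a b : ℕ) : SimpleGraph (Fin (2 * a + b)) where
  Adj x y := x ≠ y ∧ (x : ℕ) / 2 = (y : ℕ) / 2 ∧ (x : ℕ) < 2 * a
  symm := by
    constructor
    rintro x y ⟨h1, h2, h3⟩
    exact ⟨h1.symm, h2.symm, by omega⟩
  loopless := by
    constructor
    rintro x ⟨hxx, -⟩
    exact hxx rfl

/-- The adjacency matrix `M(G)` of `G`, over `F_2`. -/
def adjMat {n : ℕ} (G : SimpleGraph (Fin n)) : Matrix (Fin n) (Fin n) (ZMod 2) :=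
  fun i j => if G.Adj i j then 1 else 0

/-- The matrix `X(G)` over `F_2`: upper-left `n×n` block is `M(G)`, and the last row
and column consist entirely of `1`'s except for the `(n+1, n+1)` entry, which is `0`. -/
def Xmat {n : ℕ} (G : SimpleGraph (Fin n)) :
    Matrix (Fin (n + 1)) (Fin (n + 1)) (ZMod 2) :=
  fun i j =>
    if hi : (i : ℕ) < n then
      if hj : (j : ℕ) < n then adjMat G ⟨i, hi⟩ ⟨j, hj⟩ else 1
    else if (j : ℕ) < n then 1 else 0

/-- Finite simple graphs on vertex sets `{1, …, n}`, bundled with `n`. -/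
abbrev GraphOn := Σ n : ℕ, SimpleGraph (Fin n)

/-- One move: either pass to an isomorphic graph, or apply a mutation `μ_v`, or apply a
relative mutation `μ_{v←w}` to a graph containing an isolated vertex `u ∉ {v, w}`. -/
inductive MoveStep : GraphOn → GraphOn → Prop
  | iso {n m : ℕ} (G : SimpleGraph (Fin n)) (H : SimpleGraph (Fin m)) :
      Nonempty (G ≃g H) → MoveStep ⟨n, G⟩ ⟨m, H⟩
  | mut {n : ℕ} (G : SimpleGraph (Fin n)) (v : Fin n) :
      MoveStep ⟨n, G⟩ ⟨n, mutation G v⟩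
  | relMut {n : ℕ} (G : SimpleGraph (Fin n)) (v w u : Fin n) :
      v ≠ w → u ≠ v → u ≠ w → isIsolated G u →
      MoveStep ⟨n, G⟩ ⟨n, relMutation G v w⟩

/-- `G ≈ G'`: `G'` is obtained from `G`, up to graph isomorphism, by a finite
sequence of mutations and relative mutations (the latter in the presence of an
isolated vertex distinct from the two vertices involved). -/
def graphEquiv (A B : GraphOn) : Prop := Relation.ReflTransGen MoveStep A B

/-- The induced subgraph of `G` on `{i, j, k}` has an even number of edges. -/
def evenTriple {V : Type*} (G : SimpleGraph V) (i j k : V) : Prop :=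
  Even ((if G.Adj i j then 1 else 0) + (if G.Adj i k then 1 else 0) +
    (if G.Adj j k then 1 else 0) : ℕ)

/-- `ℓ(G)`: the number of 2-element subsets `{i, j}` (encoded as pairs `i < j`) such
that for every vertex `k ∉ {i, j}` the induced subgraph of `G` on `{i, j, k}` has an
even number of edges. -/
def ell {n : ℕ} (G : SimpleGraph (Fin n)) : ℕ :=
  ((univ : Finset (Fin n × Fin n)).filter
    (fun p => p.1 < p.2 ∧ ∀ k, k ≠ p.1 → k ≠ p.2 → evenTriple G p.1 p.2 k)).card

/-- `J(G)`: the set of 2-element subsets `{i, j}` (encoded as pairs `i < j`) with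
`N_G(i) = N_G(j) ≠ ∅`. -/
def Jfinset {n : ℕ} (G : SimpleGraph (Fin n)) : Finset (Fin n × Fin n) :=
  (univ : Finset (Fin n × Fin n)).filter
    (fun p => p.1 < p.2 ∧ G.neighborSet p.1 = G.neighborSet p.2 ∧
      G.neighborSet p.1 ≠ ∅)

/-- `j(G) = #J(G)`. -/
def jnum {n : ℕ} (G : SimpleGraph (Fin n)) : ℕ := (Jfinset G).card

/-- `i(G)`: the number of isolated vertices of `G`. -/
def numIso {n : ℕ} (G : SimpleGraph (Fin n)) : ℕ :=
  ((univ : Finset (Fin n)).filter (fun v => isIsolated G v)).card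

end

/-!
Mutating at a neighbour `w` of `v` deletes the edge `vw` (the new neighbours of `w` are its old
non-neighbours) and leaves every other edge at `v` untouched. Mutating once at each neighbour of
`v` therefore isolates `v`.
-/

namespace Mutation

variable {V : Type*} {G : SimpleGraph V} {v w x : V}

theorem adj_left_iff_of_adj (h : G.Adj v w) :
    (mutation G w).Adj v x ↔ G.Adj v x ∧ x ≠ w := by
  constructor
  · rintro ⟨-, ⟨rfl, -⟩ | ⟨rfl, hwv⟩ | ⟨-, hxw, hvx⟩⟩
    · exact (G.irrefl h).elim
    · exact absurd h.symm hwv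
    · exact ⟨hvx, hxw⟩
  · rintro ⟨hvx, hxw⟩
    exact ⟨G.ne_of_adj hvx, Or.inr (Or.inr ⟨G.ne_of_adj h, hxw, hvx⟩)⟩

theorem foldl_adj_left_iff {l : List V} (hl : l.Nodup) (hadj : ∀ w ∈ l, G.Adj v w) :
    (l.foldl mutation G).Adj v x ↔ G.Adj v x ∧ x ∉ l := by
  induction l generalizing G with
  | nil => simp
  | cons w l ih =>
    obtain ⟨hwl, hl⟩ := List.nodup_cons.mp hl
    have hvw := hadj w List.mem_cons_self
    have hadj' : ∀ u ∈ l, (mutation G w).Adj v u := fun u hu =>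
      (adj_left_iff_of_adj hvw).mpr
        ⟨hadj u (List.mem_cons_of_mem w hu), ne_of_mem_of_not_mem hu hwl⟩
    rw [List.foldl_cons, ih hl hadj', adj_left_iff_of_adj hvw, List.mem_cons]
    tauto

end Mutation

/-- For every finite simple graph `G` and every vertex `v`, there is a
finite sequence of vertices `v₁, …, vₘ` such that `v` is isolated in
`μ_{vₘ}(⋯ μ_{v₁}(G) ⋯)`. -/
theorem stmt_0 {n : ℕ} (G : SimpleGraph (Fin n)) (v : Fin n) :
    ∃ l : List (Fin n), isIsolated (l.foldl mutation G) v := by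
  let N := univ.filter (G.Adj v)
  refine ⟨N.toList, fun x hx => ?_⟩
  rw [Mutation.foldl_adj_left_iff N.nodup_toList (fun w hw => by simpa [N] using hw)] at hx
  simp [N] at hx
end

section
/- Let G be a finite simple graph, let v be a vertex of G, and let u_1, …, u_m be an enumeration, in any order and without repetition, of all neighbors of v in G. Then v is an isolated vertex of the graph μ_{u_m}(⋯ μ_{u_1}(G) ⋯) obtained by successively applying the mutations μ_{u_1}, …, μ_{u_m} to G. -/
open Classical Finset

/-!
Among the edges at `v`, the mutation `μ_u` with `u ≠ v` toggles only `vu`. Mutating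
successively at the distinct neighbours of `v` therefore toggles every edge at `v` exactly
once, which deletes them all.
-/

variable {V : Type*} (G : SimpleGraph V)

theorem mutation_adj_of_ne {v x y : V} (hx : x ≠ v) (hy : y ≠ v) :
    (mutation G v).Adj x y ↔ G.Adj x y := by
  simp only [mutation, hx, hy, false_and, false_or, ne_eq, not_false_eq_true, true_and]
  exact ⟨And.right, fun h => ⟨G.ne_of_adj h, h⟩⟩

theorem mutation_adj_right {v x : V} (hx : x ≠ v) :
    (mutation G v).Adj x v ↔ ¬ G.Adj x v := by
  simp only [mutation, hx, G.adj_comm v x]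
  tauto

theorem foldl_mutation_adj {v : V} {l : List V} (hv : v ∉ l) (hl : l.Nodup) (w : V) :
    (l.foldl mutation G).Adj v w ↔ w ≠ v ∧ (G.Adj v w ↔ w ∉ l) := by
  induction l generalizing G with
  | nil => simpa using fun h => (G.ne_of_adj h).symm
  | cons u t ih =>
    obtain ⟨hut, htn⟩ := List.nodup_cons.mp hl
    have hvu := List.ne_of_not_mem_cons hv
    rw [List.foldl_cons, ih (mutation G u) (List.not_mem_of_not_mem_cons hv) htn]
    by_cases hwu : w = u
    · subst hwu
      rw [mutation_adj_right G hvu]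
      simp [hut]
    · rw [mutation_adj_of_ne G hvu hwu]
      simp [hwu]

/-- If `l` enumerates, in any order and without repetition, all the
neighbors of `v` in `G`, then `v` is isolated after successively mutating at the
vertices of `l`. -/
theorem stmt_1 {n : ℕ} (G : SimpleGraph (Fin n)) (v : Fin n) (l : List (Fin n))
    (hnodup : l.Nodup) (hmem : ∀ w, w ∈ l ↔ G.Adj v w) :
    isIsolated (l.foldl mutation G) v := by
  have hv : v ∉ l := fun h => G.irrefl ((hmem v).mp h)
  intro w hw
  rw [foldl_mutation_adj G hv hnodup, ← hmem] at hw
  exact iff_not_self hw.2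
end

section
/- Let G be a finite simple graph on n vertices having at least one isolated vertex. Then there exist nonnegative integers α and β with 2α + β = n and β > 0, and a finite sequence of relative mutations μ_{v_1←w_1}, …, μ_{v_k←w_k}, such that μ_{v_k←w_k}(μ_{v_{k−1}←w_{k−1}}(⋯ μ_{v_1←w_1}(G) ⋯)) is isomorphic to the graph G(α,β) consisting of α disjoint edges and β isolated vertices. -/
open Classical Finset

/-!
A relative mutation `μ_{w←b}` replaces `N(w)` by `N(w) Δ N(b)`; for an edge `ab` it toggles
`w ∼ a` and leaves `w ∼ b` alone. So if `ab` is an edge inside the set `S` of unprocessed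
vertices, at most two relative mutations at each other `w ∈ S` detach `w` from `a` and `b`.
Vertices outside `S` see none of the vertices involved and keep their neighbourhoods, and `ab`
becomes a component. Removing `a, b` from `S` and repeating until `S` spans no edge leaves a
graph of maximum degree at most one, in which the isolated vertex is still isolated.

Such a graph is the graph of an involution. Involutions with the same number of fixed points
have the same cycle type, hence are conjugate, and a conjugating permutation is an isomorphism
onto `G(α, β)`.
-/

open SimpleGraph

section

variable {V : Type*}

def relMutations (G : SimpleGraph V) (l : List (V × V)) : SimpleGraph V :=
  l.foldl (fun H p => relMutation H p.1 p.2) G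

lemma relMutations_cons (G : SimpleGraph V) (p : V × V) (l : List (V × V)) :
    relMutations G (p :: l) = relMutations (relMutation G p.1 p.2) l := rfl

lemma relMutations_append (G : SimpleGraph V) (l₁ l₂ : List (V × V)) :
    relMutations G (l₁ ++ l₂) = relMutations (relMutations G l₁) l₂ :=
  List.foldl_append

lemma relMutation_adj_of_ne (G : SimpleGraph V) (v u : V) {x y : V} (hx : x ≠ v)
    (hy : y ≠ v) : (relMutation G v u).Adj x y ↔ G.Adj x y := by
  simp only [relMutation, hx, hy, false_and, false_or, ne_eq, not_false_eq_true, true_and]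
  exact and_iff_right_of_imp G.ne_of_adj

lemma relMutation_adj_left (G : SimpleGraph V) (v u : V) {y : V} (hy : y ≠ v) :
    (relMutation G v u).Adj v y ↔ (G.Adj u y ↔ ¬ G.Adj v y) := by
  simp [relMutation, hy, Ne.symm hy]

lemma relMutations_adj_of_forall_ne {G : SimpleGraph V} {l : List (V × V)} {x y : V}
    (h : ∀ p ∈ l, p.1 ≠ x ∧ p.1 ≠ y) : (relMutations G l).Adj x y ↔ G.Adj x y := by
  induction l generalizing G with
  | nil => rfl
  | cons p l ih =>
    rw [List.forall_mem_cons] at h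
    rw [relMutations_cons, ih h.2, relMutation_adj_of_ne _ _ _ h.1.1.symm h.1.2.symm]

lemma relMutations_adj_of_notMem {G : SimpleGraph V} {l : List (V × V)} {W : Finset V}
    {x y : V} (hl : ∀ p ∈ l, p.1 ∈ W) (hx : x ∉ W) (hy : y ∉ W) :
    (relMutations G l).Adj x y ↔ G.Adj x y :=
  relMutations_adj_of_forall_ne fun p hp =>
    ⟨fun h => hx (h ▸ hl p hp), fun h => hy (h ▸ hl p hp)⟩

lemma exists_relMutations_not_adj {G : SimpleGraph V} {a b w : V} (hab : G.Adj a b)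
    (hwb : w ≠ b) :
    ∃ l : List (V × V), (∀ p ∈ l, p = (w, b)) ∧ ¬ (relMutations G l).Adj w a ∧
      ((relMutations G l).Adj w b ↔ G.Adj w b) ∧
      ∀ y, (relMutations G l).Adj w y → G.Adj w y ∨ G.Adj b y := by
  by_cases hwa : G.Adj w a
  · have hadj : ∀ y, y ≠ w →
        ((relMutations G [(w, b)]).Adj w y ↔ (G.Adj b y ↔ ¬ G.Adj w y)) :=
      fun y hy => relMutation_adj_left G w b hy
    refine ⟨[(w, b)], by simp, ?_, ?_, fun y hy => ?_⟩
    · rw [hadj a hwa.ne.symm]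
      simp [hab.symm, hwa]
    · rw [hadj b hwb.symm]
      simp
    · rw [hadj y (hy.ne.symm)] at hy
      tauto
  · exact ⟨[], by simp, hwa, Iff.rfl, fun y hy => Or.inl hy⟩

lemma exists_relMutations_detach {G : SimpleGraph V} {a b w : V} (hab : G.Adj a b)
    (hwa : w ≠ a) (hwb : w ≠ b) :
    ∃ l : List (V × V), (∀ p ∈ l, p.1 = w ∧ p.1 ≠ p.2) ∧
      ¬ (relMutations G l).Adj w a ∧ ¬ (relMutations G l).Adj w b ∧
      ∀ y, (relMutations G l).Adj w y → G.Adj w y ∨ G.Adj a y ∨ G.Adj b y := by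
  obtain ⟨l₁, hl₁, hwa₁, -, hN₁⟩ := exists_relMutations_not_adj hab hwb
  set G₁ := relMutations G l₁
  have hfix₁ : ∀ {x y}, x ≠ w → y ≠ w → (G₁.Adj x y ↔ G.Adj x y) := fun hx hy =>
    relMutations_adj_of_forall_ne fun p hp => by rw [hl₁ p hp]; exact ⟨hx.symm, hy.symm⟩
  obtain ⟨l₂, hl₂, hwb₂, hwa₂, hN₂⟩ :=
    exists_relMutations_not_adj ((hfix₁ hwb.symm hwa.symm).2 hab.symm) hwa
  refine ⟨l₁ ++ l₂, ?_, ?_, ?_, fun y hy => ?_⟩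
  · intro p hp
    obtain rfl | rfl := List.mem_append.1 hp |>.imp (hl₁ p) (hl₂ p)
    · exact ⟨rfl, hwb⟩
    · exact ⟨rfl, hwa⟩
  · rw [relMutations_append, hwa₂]
    exact hwa₁
  · rw [relMutations_append]
    exact hwb₂
  · rw [relMutations_append] at hy
    obtain hy | hay := hN₂ y hy
    · exact (hN₁ y hy).imp_right Or.inr
    · have hyw : y ≠ w := by
        rintro rfl
        exact hwa₁ hay.symm
      exact Or.inr (Or.inl ((hfix₁ hwa.symm hyw).1 hay))

lemma relMutations_adj_iff_of_not_adj {G : SimpleGraph V} {l : List (V × V)} {w x : V}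
    (hl : ∀ p ∈ l, p.1 = w) (hxw : x ≠ w) (hwx : ¬ (relMutations G l).Adj w x)
    (hwx' : ¬ G.Adj w x) (y : V) : (relMutations G l).Adj x y ↔ G.Adj x y := by
  by_cases hyw : y = w
  · subst hyw
    exact iff_of_false (fun h => hwx h.symm) fun h => hwx' h.symm
  · exact relMutations_adj_of_forall_ne fun p hp => hl p hp ▸ ⟨hxw.symm, Ne.symm hyw⟩

lemma exists_relMutations_detach_finset {a b : V} (W : Finset V) (haW : a ∉ W) (hbW : b ∉ W)
    (G : SimpleGraph V) (hab : G.Adj a b) :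
    ∃ l : List (V × V), (∀ p ∈ l, p.1 ∈ W ∧ p.1 ≠ p.2) ∧
      (∀ w ∈ W, ¬ (relMutations G l).Adj w a ∧ ¬ (relMutations G l).Adj w b) ∧
      ∀ x ∉ W, (∀ y ∈ insert a (insert b W), ¬ G.Adj x y) →
        ∀ y, (relMutations G l).Adj x y ↔ G.Adj x y := by
  induction W using Finset.induction_on generalizing G with
  | empty => exact ⟨[], by simp, by simp, fun _ _ _ _ => Iff.rfl⟩
  | insert w W hw ih =>
    rw [Finset.mem_insert, not_or] at haW hbW
    obtain ⟨l₁, hl₁, hdet₁, hkeep₁⟩ := ih haW.2 hbW.2 G hab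
    set G₁ := relMutations G l₁
    have hab₁ : G₁.Adj a b :=
      (relMutations_adj_of_notMem (fun p hp => (hl₁ p hp).1) haW.2 hbW.2).2 hab
    obtain ⟨l₂, hl₂, hwa₂, hwb₂, hN₂⟩ :=
      exists_relMutations_detach hab₁ (Ne.symm haW.1) (Ne.symm hbW.1)
    refine ⟨l₁ ++ l₂, fun p hp => ?_, fun v hv => ?_, fun x hx hxN => ?_⟩
    · rcases List.mem_append.1 hp with hp | hp
      · exact ⟨Finset.mem_insert_of_mem (hl₁ p hp).1, (hl₁ p hp).2⟩
      · exact ⟨(hl₂ p hp).1 ▸ Finset.mem_insert_self w W, (hl₂ p hp).2⟩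
    · rw [relMutations_append]
      rcases Finset.mem_insert.1 hv with rfl | hv
      · exact ⟨hwa₂, hwb₂⟩
      · have hvw : v ≠ w := fun h => hw (h ▸ hv)
        have hfix₂ : ∀ {y}, y ≠ w → ((relMutations G₁ l₂).Adj v y ↔ G₁.Adj v y) :=
          fun hy => relMutations_adj_of_forall_ne fun p hp =>
            (hl₂ p hp).1 ▸ ⟨hvw.symm, hy.symm⟩
        rw [hfix₂ haW.1, hfix₂ hbW.1]
        exact hdet₁ v hv
    · rw [Finset.mem_insert, not_or] at hx
      simp only [Finset.mem_insert, forall_eq_or_imp] at hxN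
      have hG₁ : ∀ y, G₁.Adj x y ↔ G.Adj x y :=
        hkeep₁ x hx.2 (by simp only [Finset.mem_insert, forall_eq_or_imp]; tauto)
      have hwx₁ : ¬ G₁.Adj w x := fun h => hxN.2.2.1 ((hG₁ w).1 h.symm)
      have hwx₂ : ¬ (relMutations G₁ l₂).Adj w x := fun h => by
        rcases hN₂ x h with h | h | h
        exacts [hwx₁ h, hxN.1 ((hG₁ a).1 h.symm), hxN.2.1 ((hG₁ b).1 h.symm)]
      intro y
      rw [relMutations_append,
        relMutations_adj_iff_of_not_adj (fun p hp => (hl₂ p hp).1) hx.1 hwx₂ hwx₁, hG₁]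

def MatchedOutside (G : SimpleGraph V) (S : Finset V) : Prop :=
  ∀ v ∉ S, (∀ w, G.Adj v w → w ∉ S) ∧ (G.neighborSet v).Subsingleton

lemma adj_iff_eq_of_detached {G : SimpleGraph V} {S : Finset V} {a b : V} {l : List (V × V)}
    (hS : MatchedOutside G S) (hab : G.Adj a b) (haS : a ∈ S)
    (hl : ∀ p ∈ l, p.1 ∈ (S.erase a).erase b)
    (hdet : ∀ w ∈ (S.erase a).erase b, ¬ (relMutations G l).Adj w a) (y : V) :
    (relMutations G l).Adj a y ↔ y = b := by
  have haW : a ∉ (S.erase a).erase b := by simp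
  constructor
  · intro h
    have hyW : y ∉ (S.erase a).erase b := fun hy => hdet y hy h.symm
    have hyS : y ∈ S := by
      by_contra hyS
      exact (hS y hyS).1 a ((relMutations_adj_of_notMem hl haW hyW).1 h).symm haS
    simp only [Finset.mem_erase, not_and, ne_eq] at hyW
    by_contra hyb
    exact hyW hyb h.ne.symm hyS
  · rintro rfl
    exact (relMutations_adj_of_notMem hl haW (by simp)).2 hab

lemma exists_relMutations_matchedOutside_erase {G : SimpleGraph V} {S : Finset V} {a b : V}
    (hS : MatchedOutside G S) (hab : G.Adj a b) (haS : a ∈ S) :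
    ∃ l : List (V × V), (∀ p ∈ l, p.1 ≠ p.2) ∧
      MatchedOutside (relMutations G l) ((S.erase a).erase b) ∧
      ∀ x ∉ S, ∀ y, (relMutations G l).Adj x y ↔ G.Adj x y := by
  have hbS : b ∈ S := by_contra fun hbS => (hS b hbS).1 a hab.symm haS
  set W := (S.erase a).erase b with hW
  have hWS : W ⊆ S := (Finset.erase_subset _ _).trans (Finset.erase_subset _ _)
  obtain ⟨l, hl, hdet, hkeep⟩ :=
    exists_relMutations_detach_finset W (by simp [W]) (by simp [W]) G hab
  set G' := relMutations G l
  have hkeepS : ∀ x ∉ S, ∀ y, G'.Adj x y ↔ G.Adj x y := fun x hx =>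
    hkeep x (fun h => hx (hWS h)) fun y hy hxy => (hS x hx).1 y hxy (by
      simp only [Finset.mem_insert] at hy
      rcases hy with rfl | rfl | hy
      exacts [haS, hbS, hWS hy])
  have ha : ∀ y, G'.Adj a y ↔ y = b :=
    adj_iff_eq_of_detached hS hab haS (fun p hp => (hl p hp).1) fun w hw => (hdet w hw).1
  have hb : ∀ y, G'.Adj b y ↔ y = a := by
    rw [hW, Finset.erase_right_comm] at hl hdet
    exact adj_iff_eq_of_detached hS hab.symm hbS (fun p hp => (hl p hp).1)
      fun w hw => (hdet w hw).2
  refine ⟨l, fun p hp => (hl p hp).2, fun v hv => ?_, hkeepS⟩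
  by_cases hvS : v ∈ S
  · obtain rfl | rfl : v = a ∨ v = b := by
      by_contra h
      rw [not_or] at h
      exact hv (by simp [W, h.1, h.2, hvS])
    · exact ⟨fun w hw => by simp [W, (ha w).1 hw], fun w hw w' hw' => by
        rw [mem_neighborSet, ha] at hw hw'; rw [hw, hw']⟩
    · exact ⟨fun w hw => by simp [W, (hb w).1 hw], fun w hw w' hw' => by
        rw [mem_neighborSet, hb] at hw hw'; rw [hw, hw']⟩
  · refine ⟨fun w hw hwW => (hS v hvS).1 w ((hkeepS v hvS w).1 hw) (hWS hwW), ?_⟩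
    rw [show G'.neighborSet v = G.neighborSet v from Set.ext (hkeepS v hvS)]
    exact (hS v hvS).2

lemma exists_relMutations_subsingleton_neighborSet (S : Finset V) :
    ∀ G : SimpleGraph V, MatchedOutside G S →
      ∃ l : List (V × V), (∀ p ∈ l, p.1 ≠ p.2) ∧
        (∀ x ∉ S, ∀ y, (relMutations G l).Adj x y ↔ G.Adj x y) ∧
        ∀ v, ((relMutations G l).neighborSet v).Subsingleton := by
  induction S using Finset.strongInduction with
  | _ S ih =>
    intro G hS
    by_cases hedge : ∃ a ∈ S, ∃ b, G.Adj a b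
    · obtain ⟨a, haS, b, hab⟩ := hedge
      obtain ⟨l₁, hl₁, hS₁, hkeep₁⟩ :=
        exists_relMutations_matchedOutside_erase hS hab haS
      obtain ⟨l₂, hl₂, hkeep₂, hsub₂⟩ := ih _ ((Finset.erase_subset _ _).trans_ssubset
        (Finset.erase_ssubset haS)) _ hS₁
      refine ⟨l₁ ++ l₂, ?_, fun x hx y => ?_, ?_⟩
      · intro p hp
        exact (List.mem_append.1 hp).elim (hl₁ p) (hl₂ p)
      · rw [relMutations_append, hkeep₂ x (fun h => hx ((Finset.erase_subset _ _).trans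
          (Finset.erase_subset _ _) h)), hkeep₁ x hx]
      · rw [relMutations_append]; exact hsub₂
    · simp only [not_exists, not_and] at hedge
      refine ⟨[], by simp, fun _ _ _ => Iff.rfl, fun v => ?_⟩
      by_cases hvS : v ∈ S
      · have hisol : ∀ w, ¬ G.Adj v w := fun w hvw => by
          by_cases hwS : w ∈ S
          · exact hedge v hvS w hvw
          · exact (hS w hwS).1 v hvw.symm hvS
        exact fun w hw => absurd hw (hisol w)
      · exact (hS v hvS).2

section Matching

variable {G : SimpleGraph V}

noncomputable def partner (G : SimpleGraph V) (v : V) : V :=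
  if h : ∃ w, G.Adj v w then h.choose else v

lemma adj_partner {v : V} (h : ∃ w, G.Adj v w) : G.Adj v (partner G v) := by
  rw [partner, dif_pos h]
  exact h.choose_spec

lemma partner_eq_self {v : V} (h : isIsolated G v) : partner G v = v := by
  rw [partner, dif_neg (fun ⟨w, hw⟩ => h w hw)]

lemma partner_eq_self_iff {v : V} : partner G v = v ↔ isIsolated G v := by
  refine ⟨fun h w hw => ?_, partner_eq_self⟩
  exact (adj_partner ⟨w, hw⟩).ne h.symm

lemma adj_iff_partner_eq (hG : ∀ v, (G.neighborSet v).Subsingleton) {v w : V} :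
    G.Adj v w ↔ v ≠ w ∧ partner G v = w := by
  refine ⟨fun h => ⟨h.ne, hG v (adj_partner ⟨w, h⟩) h⟩, fun ⟨hvw, h⟩ => ?_⟩
  by_cases hv : ∃ w, G.Adj v w
  · exact h ▸ adj_partner hv
  · exact absurd (h ▸ partner_eq_self (fun w hw => hv ⟨w, hw⟩)) (Ne.symm hvw)

lemma partner_involutive (hG : ∀ v, (G.neighborSet v).Subsingleton) :
    Function.Involutive (partner G) := fun v => by
  by_cases hv : ∃ w, G.Adj v w
  · exact ((adj_iff_partner_eq hG).1 (adj_partner hv).symm).2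
  · rw [partner_eq_self (fun w hw => hv ⟨w, hw⟩), partner_eq_self (fun w hw => hv ⟨w, hw⟩)]

noncomputable def partnerPerm (G : SimpleGraph V) (hG : ∀ v, (G.neighborSet v).Subsingleton) :
    Equiv.Perm V :=
  (partner_involutive hG).toPerm

lemma partnerPerm_sq (hG : ∀ v, (G.neighborSet v).Subsingleton) : partnerPerm G hG ^ 2 = 1 :=
  Equiv.ext (partner_involutive hG)

lemma card_support_partnerPerm [Fintype V] [DecidableEq V]
    (hG : ∀ v, (G.neighborSet v).Subsingleton) :
    #(partnerPerm G hG).support = Fintype.card V - #{v | isIsolated G v} := by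
  have h : (partnerPerm G hG).support = ({v | ¬ isIsolated G v} : Finset V) := by
    ext v
    simp [partnerPerm, partner_eq_self_iff]
  rw [h, Finset.filter_not, Finset.card_sdiff_of_subset (Finset.filter_subset _ _),
    Finset.card_univ]

end Matching

end

lemma Equiv.Perm.cycleType_eq_of_sq_eq_one {α : Type*} [Fintype α] [DecidableEq α]
    {σ τ : Equiv.Perm α} (hσ : σ ^ 2 = 1) (hτ : τ ^ 2 = 1) (h : #σ.support = #τ.support) :
    σ.cycleType = τ.cycleType := by
  have : Fact (Nat.Prime 2) := ⟨Nat.prime_two⟩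
  have hσ' := cycleType_of_pow_prime_eq_one hσ
  have hτ' := cycleType_of_pow_prime_eq_one hτ
  rw [← σ.sum_cycleType, ← τ.sum_cycleType, hσ', hτ', Multiset.sum_replicate,
    Multiset.sum_replicate, smul_eq_mul, smul_eq_mul] at h
  rw [hσ', hτ', Nat.eq_of_mul_eq_mul_right two_pos h]

lemma nonempty_iso_of_card_isolated_eq {V : Type*} [Fintype V] {G H : SimpleGraph V}
    (hG : ∀ v, (G.neighborSet v).Subsingleton) (hH : ∀ v, (H.neighborSet v).Subsingleton)
    (h : #{v | isIsolated G v} = #{v | isIsolated H v}) : Nonempty (G ≃g H) := by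
  have hconj : IsConj (partnerPerm G hG) (partnerPerm H hH) :=
    Equiv.Perm.isConj_iff_cycleType_eq.2 <| Equiv.Perm.cycleType_eq_of_sq_eq_one
      (partnerPerm_sq hG) (partnerPerm_sq hH) (by rw [card_support_partnerPerm,
        card_support_partnerPerm, h])
  obtain ⟨c, hc⟩ := isConj_iff.1 hconj
  have hcomm : ∀ v, partner H (c v) = c (partner G v) := fun v => by
    change partnerPerm H hH (c v) = c (partnerPerm G hG v)
    rw [← hc]
    simp
  refine ⟨⟨c, fun {v w} => ?_⟩⟩
  rw [adj_iff_partner_eq hH, adj_iff_partner_eq hG, hcomm, c.injective.ne_iff, c.injective.eq_iff]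

lemma pairGraph_neighborSet_subsingleton (α β : ℕ) (x : Fin (2 * α + β)) :
    ((pairGraph α β).neighborSet x).Subsingleton := by
  rintro y ⟨hxy, hxy₂, -⟩ z ⟨hxz, hxz₂, -⟩
  rw [Ne, Fin.ext_iff] at hxy hxz
  exact Fin.ext (by omega)

lemma isIsolated_pairGraph_iff {α β : ℕ} {x : Fin (2 * α + β)} :
    isIsolated (pairGraph α β) x ↔ 2 * α ≤ x := by
  refine ⟨fun h => ?_, fun h y ⟨_, _, hx⟩ => by omega⟩
  by_contra hx
  refine h ⟨x + 1 - 2 * (x % 2), by omega⟩ ⟨?_, ?_, by omega⟩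
  · rw [Ne, Fin.ext_iff]
    dsimp only
    omega
  · dsimp only
    omega

lemma card_isolated_pairGraph (α β : ℕ) : #{x | isIsolated (pairGraph α β) x} = β := by
  simp_rw [isIsolated_pairGraph_iff, ← not_lt, Finset.filter_not]
  rw [Finset.card_sdiff_of_subset (Finset.filter_subset _ _), Fin.card_filter_val_lt,
    Finset.card_univ, Fintype.card_fin]
  omega

lemma exists_iso_pairGraph {n : ℕ} (H : SimpleGraph (Fin n))
    (hH : ∀ v, (H.neighborSet v).Subsingleton) {u : Fin n} (hu : isIsolated H u) :
    ∃ α β : ℕ, 2 * α + β = n ∧ 0 < β ∧ Nonempty (H ≃g pairGraph α β) := by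
  obtain ⟨α, hα⟩ := Equiv.Perm.two_dvd_card_support (partnerPerm_sq hH)
  have hβ : 0 < #{v | isIsolated H v} := Finset.card_pos.2 ⟨u, by simp [hu]⟩
  have hβn : #{v | isIsolated H v} ≤ n := (Finset.card_le_univ _).trans_eq (Fintype.card_fin n)
  rw [card_support_partnerPerm, Fintype.card_fin] at hα
  generalize hβdef : #{v | isIsolated H v} = β at hα hβ hβn
  obtain rfl : n = 2 * α + β := by omega
  refine ⟨α, β, rfl, hβ, nonempty_iso_of_card_isolated_eq hH
    (pairGraph_neighborSet_subsingleton α β) ?_⟩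
  rw [card_isolated_pairGraph, hβdef]

/-- A graph on `n` vertices with at least one isolated vertex can be
transformed, by a finite sequence of relative mutations, into a graph isomorphic to
`G(α, β)` with `2α + β = n` and `β > 0`. -/
theorem stmt_2 {n : ℕ} (G : SimpleGraph (Fin n)) (hiso : ∃ u, isIsolated G u) :
    ∃ α β : ℕ, 2 * α + β = n ∧ 0 < β ∧
      ∃ l : List (Fin n × Fin n), (∀ p ∈ l, p.1 ≠ p.2) ∧
        Nonempty ((l.foldl (fun H p => relMutation H p.1 p.2) G) ≃g pairGraph α β) := by
  obtain ⟨u, hu⟩ := hiso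
  have hS : MatchedOutside G (univ.erase u) := fun v hv => by
    obtain rfl : v = u := by simpa using hv
    exact ⟨fun w hw => absurd hw (hu w), fun w hw => absurd hw (hu w)⟩
  obtain ⟨l, hl, hkeep, hmatch⟩ := exists_relMutations_subsingleton_neighborSet _ G hS
  have hu' : isIsolated (relMutations G l) u := fun w => by
    rw [hkeep u (by simp)]
    exact hu w
  obtain ⟨α, β, hn, hβ, e⟩ := exists_iso_pairGraph (relMutations G l) hmatch hu'
  exact ⟨α, β, hn, hβ, l, hl, e⟩
end

section
/- Let G be a finite simple graph on the vertex set {1,…,n} and let i ∈ {1,…,n}. Then the identity (I + E_{i,n+1}) · X(G) · (I + E_{n+1,i}) = X(μ_i(G)) holds for matrices over F_2, where I is the (n+1)×(n+1) identity matrix and E_{a,b} is the (n+1)×(n+1) matrix unit with entry 1 in position (a,b) and 0 elsewhere. -/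
open Classical Finset

/-! Multiplying by `I + E_{i,n+1}` on the left adds the last row to row `i`, and by
`I + E_{n+1,i}` on the right adds the last column to column `i`. As the last row and column
of `X(G)` are `1` off the corner and `0` at the corner, this flips every entry of row and
column `i` of `M(G)` except the diagonal one, which is flipped twice: over `F_2` that is
exactly `M(μ_i(G))`. -/

namespace Matrix

variable {m R : Type*} [Fintype m] [DecidableEq m] [Semiring R]

theorem one_add_single_mul_mul_one_add_single_apply (A : Matrix m m R) (p q a b : m) :
    ((1 + single p q 1) * A * (1 + single q p 1) : Matrix m m R) a b =
      A a b + (if a = p then A q b else 0) + (if b = p then A a q else 0) +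
        (if a = p ∧ b = p then A q q else 0) := by
  simp only [add_mul, mul_add, one_mul, mul_one, add_apply]
  by_cases ha : a = p <;> by_cases hb : b = p <;>
    simp [ha, hb, single_mul_apply_of_ne, mul_single_apply_of_ne, add_assoc]

end Matrix

theorem mutation_adj {V : Type*} (G : SimpleGraph V) (v x y : V) :
    (mutation G v).Adj x y ↔ x ≠ y ∧ (G.Adj x y ↔ x ≠ v ∧ y ≠ v) := by
  simp only [mutation]
  by_cases hx : x = v <;> by_cases hy : y = v <;> subst_vars <;> simp_all [G.adj_comm]

theorem adjMat_mutation {n : ℕ} (G : SimpleGraph (Fin n)) (v x y : Fin n) :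
    adjMat (mutation G v) x y =
      adjMat G x y + (if x = v then 1 else 0) + (if y = v then 1 else 0) := by
  unfold adjMat
  rw [mutation_adj]
  by_cases hx : x = v <;> by_cases hy : y = v <;> split_ifs <;> simp_all <;> decide

section Xmat

variable {n : ℕ} (G : SimpleGraph (Fin n))

@[simp] theorem Xmat_castSucc_castSucc (x y : Fin n) :
    Xmat G x.castSucc y.castSucc = adjMat G x y := by
  simp [Xmat]

@[simp] theorem Xmat_castSucc_last (x : Fin n) : Xmat G x.castSucc (Fin.last n) = 1 := by
  simp [Xmat]

@[simp] theorem Xmat_last_castSucc (y : Fin n) : Xmat G (Fin.last n) y.castSucc = 1 := by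
  simp [Xmat]

@[simp] theorem Xmat_last_last : Xmat G (Fin.last n) (Fin.last n) = 0 := by
  simp [Xmat]

end Xmat

/-- `(I + E_{i,n+1}) ⬝ X(G) ⬝ (I + E_{n+1,i}) = X(μ_i(G))` over `F_2`. -/
theorem stmt_4 {n : ℕ} (G : SimpleGraph (Fin n)) (i : Fin n) :
    (1 + Matrix.single i.castSucc (Fin.last n) (1 : ZMod 2)) * Xmat G *
      (1 + Matrix.single (Fin.last n) i.castSucc (1 : ZMod 2)) =
    Xmat (mutation G i) := by
  ext a b
  rw [Matrix.one_add_single_mul_mul_one_add_single_apply]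
  induction a using Fin.lastCases <;> induction b using Fin.lastCases <;>
    simp [adjMat_mutation, (Fin.castSucc_lt_last i).ne']
end

section
/- Let G be a finite simple graph on the vertex set {1,…,n}, let p be an isolated vertex of G, and let i, j be vertices such that i, j, p are pairwise distinct. Then the identity (I + E_{i,j} + E_{i,p}) · X(G) · (I + E_{j,i} + E_{p,i}) = X(μ_{i←j}(G)) holds for matrices over F_2, where I is the (n+1)×(n+1) identity matrix and E_{a,b} is the (n+1)×(n+1) matrix unit with entry 1 in position (a,b) and 0 elsewhere. -/
open Classical Finset

/-! $X(G)$ is the adjacency matrix of the cone over $G$ (apex at the last index), and over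
$\mathbb F_2$ the congruence $A \mapsto (1 + E_{vu}) A (1 + E_{uv})$ turns the adjacency matrix
of any graph into that of $μ_{v←u}$. The left factor is $(1 + E_{ip})(1 + E_{ij})$, so the
left-hand side is the adjacency matrix of $μ_{i←p}(μ_{i←j}(\mathrm{cone}\,G))$. In the cone,
$μ_{i←j}$ gives $i$ the neighbourhood $N_G(i) Δ N_G(j)$ and detaches it from the apex, which
both $i$ and $j$ see. As $p$ is isolated in $G$, its only neighbour in the cone is the apex,
so $μ_{i←p}$ just reattaches $i$ to the apex: the result is the cone over $μ_{i←j}(G)$. -/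

open Matrix

lemma ite_add_ite_zmod_two (a b : Prop) [Decidable a] [Decidable b] :
    ((if a then 1 else 0) + (if b then 1 else 0) : ZMod 2) = if (b ↔ ¬ a) then 1 else 0 := by
  by_cases a <;> by_cases b <;> simp_all [CharTwo.add_self_eq_zero]

@[simp]
lemma relMutation_adj {V : Type*} (H : SimpleGraph V) (v u x y : V) :
    (relMutation H v u).Adj x y ↔ x ≠ y ∧
      ((x = v ∧ (H.Adj u y ↔ ¬ H.Adj v y)) ∨ (y = v ∧ (H.Adj u x ↔ ¬ H.Adj v x)) ∨
        (x ≠ v ∧ y ≠ v ∧ H.Adj x y)) :=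
  Iff.rfl

lemma adjMatrix_relMutation {V : Type*} [Fintype V] [DecidableEq V] (H : SimpleGraph V)
    (v u : V) :
    transvection v u (1 : ZMod 2) * H.adjMatrix (ZMod 2) * transvection u v 1 =
      (relMutation H v u).adjMatrix (ZMod 2) := by
  ext x y
  rw [SimpleGraph.adjMatrix_apply]
  by_cases hx : x = v <;> by_cases hy : y = v
  · subst x y
    rw [mul_transvection_apply_same, transvection_mul_apply_same, transvection_mul_apply_same]
    simp [H.adj_comm u v, CharTwo.add_self_eq_zero]
  · subst x
    rw [mul_transvection_apply_of_ne _ _ _ _ hy, transvection_mul_apply_same]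
    simp [Ne.symm hy, hy, ite_add_ite_zmod_two]
  · subst y
    rw [mul_transvection_apply_same, transvection_mul_apply_of_ne _ _ _ _ hx,
      transvection_mul_apply_of_ne _ _ _ _ hx]
    simp [hx, ite_add_ite_zmod_two, H.adj_comm]
  · rw [mul_transvection_apply_of_ne _ _ _ _ hy, transvection_mul_apply_of_ne _ _ _ _ hx]
    simp [hx, hy, and_iff_right_of_imp H.ne_of_adj]

def cone {n : ℕ} (G : SimpleGraph (Fin n)) : SimpleGraph (Fin (n + 1)) :=
  G.map Fin.castSuccEmb ⊔ SimpleGraph.fromRel (fun a _ => a = Fin.last n)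

section cone

variable {n : ℕ} (G : SimpleGraph (Fin n))

@[simp]
lemma cone_adj_castSucc (x y : Fin n) : (cone G).Adj x.castSucc y.castSucc ↔ G.Adj x y := by
  simpa [cone] using
    SimpleGraph.map_adj_apply (f := Fin.castSuccEmb) (G := G)

@[simp]
lemma cone_adj_castSucc_last (x : Fin n) : (cone G).Adj x.castSucc (Fin.last n) := by
  simp [cone]

@[simp]
lemma cone_adj_last_castSucc (x : Fin n) : (cone G).Adj (Fin.last n) x.castSucc := by
  simp [cone, eq_comm (a := Fin.last n)]

lemma Xmat_eq_adjMatrix_cone : Xmat G = (cone G).adjMatrix (ZMod 2) := by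
  ext a b
  induction a using Fin.lastCases <;> induction b using Fin.lastCases <;> simp [Xmat, adjMat]

lemma relMutation_relMutation_cone {p i : Fin n} (hp : isIsolated G p) (hip : i ≠ p)
    (j : Fin n) :
    relMutation (relMutation (cone G) i.castSucc j.castSucc) i.castSucc p.castSucc =
      cone (relMutation G i j) := by
  have hpx : ∀ x, ¬ G.Adj p x := hp
  have hxp : ∀ x, ¬ G.Adj x p := fun x h => hp x h.symm
  ext a b
  induction a using Fin.lastCases with
  | last =>
    induction b using Fin.lastCases <;>
      simp [hip.symm, (Fin.castSucc_ne_last _).symm, _root_.em]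
  | cast x =>
    induction b using Fin.lastCases with
    | last => simp [hip.symm, (Fin.castSucc_ne_last _).symm, _root_.em]
    | cast y =>
      simp only [relMutation_adj, cone_adj_castSucc, Fin.castSucc_inj]
      by_cases hx : x = i <;> by_cases hy : y = i <;> simp_all [Ne.symm hip, eq_comm (a := i)]

end cone

section transvection

variable {ι R : Type*} [Fintype ι] [DecidableEq ι] [CommRing R] {i k : ι}

lemma one_add_single_add_single_eq_transvection_mul_transvection (hik : i ≠ k) (j : ι)
    (c d : R) :
    1 + single i j c + single i k d = transvection i k d * transvection i j c := by
  simp only [transvection, Matrix.add_mul, Matrix.mul_add, Matrix.one_mul, Matrix.mul_one,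
    single_mul_single_of_ne (c := d) _ _ _ hik.symm, add_zero]
  abel

lemma one_add_single_add_single_eq_transvection_mul_transvection' (hik : i ≠ k) (j : ι)
    (c d : R) :
    1 + single j i c + single k i d = transvection j i c * transvection k i d := by
  simp only [transvection, Matrix.add_mul, Matrix.mul_add, Matrix.one_mul, Matrix.mul_one,
    single_mul_single_of_ne (c := c) _ _ _ hik, add_zero]

end transvection

theorem stmt_5_general {n : ℕ} (G : SimpleGraph (Fin n)) (p i j : Fin n)
    (hp : isIsolated G p) (hip : i ≠ p) :
    (1 + Matrix.single i.castSucc j.castSucc (1 : ZMod 2) +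
        Matrix.single i.castSucc p.castSucc (1 : ZMod 2)) * Xmat G *
      (1 + Matrix.single j.castSucc i.castSucc (1 : ZMod 2) +
        Matrix.single p.castSucc i.castSucc (1 : ZMod 2)) =
    Xmat (relMutation G i j) := by
  have hip' : i.castSucc ≠ p.castSucc := Fin.castSucc_injective n |>.ne hip
  rw [one_add_single_add_single_eq_transvection_mul_transvection hip',
    one_add_single_add_single_eq_transvection_mul_transvection' hip', Xmat_eq_adjMatrix_cone,
    Xmat_eq_adjMatrix_cone, ← relMutation_relMutation_cone G hp hip, ← adjMatrix_relMutation,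
    ← adjMatrix_relMutation]
  simp only [Matrix.mul_assoc]

/-- if `p` is an isolated vertex of `G` and `i, j, p` are pairwise
distinct, then `(I + E_{i,j} + E_{i,p}) ⬝ X(G) ⬝ (I + E_{j,i} + E_{p,i}) = X(μ_{i←j}(G))`
over `F_2`. -/
theorem stmt_5 {n : ℕ} (G : SimpleGraph (Fin n)) (p i j : Fin n)
    (hp : isIsolated G p) (hij : i ≠ j) (hip : i ≠ p) (hjp : j ≠ p) :
    (1 + Matrix.single i.castSucc j.castSucc (1 : ZMod 2) +
        Matrix.single i.castSucc p.castSucc (1 : ZMod 2)) * Xmat G *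
      (1 + Matrix.single j.castSucc i.castSucc (1 : ZMod 2) +
        Matrix.single p.castSucc i.castSucc (1 : ZMod 2)) =
    Xmat (relMutation G i j) :=
  stmt_5_general G p i j hp hip
end

section
/- Let G be a finite simple graph on n vertices having at least one isolated vertex, and suppose that some finite sequence of relative mutations transforms G into a graph isomorphic to G(α,β), where 2α + β = n and β > 0. Then the rank over F_2 of X(G) equals 2α + 2. -/
open Classical Finset

/-!
Over `F_2` the relative mutation `μ_{v←u}` replaces `M(G)` by `T M(G) Tᵀ` for the transvection
`T = 1 + E_{vu}`, so it preserves the rank of the adjacency matrix, and `M(G(α, β))` is a permuted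
diagonal matrix of rank `2α`. If `u` is isolated, row `u` of `X(G) x = 0` forces the last
coordinate of `x` to vanish, so `ker X(G) ≅ ker M(G) ∩ {y | ∑ yᵢ = 0}`. Since
`e_u ∈ ker M(G)` has coordinate sum `1`, this is a hyperplane of `ker M(G)`, and rank–nullity
gives `rank X(G) = rank M(G) + 2`.
-/

open Matrix

lemma adjMat_relMutation {n : ℕ} (G : SimpleGraph (Fin n)) (v u : Fin n) :
    adjMat (relMutation G v u) = transvection v u 1 * adjMat G * transvection u v 1 := by
  ext i j
  rcases eq_or_ne j v with rfl | hj
  · rcases eq_or_ne i j with rfl | hi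
    · simp [adjMat, G.adj_comm u i, CharTwo.add_self_eq_zero]
    · by_cases h1 : G.Adj u i <;> by_cases h2 : G.Adj j i <;>
        simp [adjMat, relMutation, hi, G.adj_comm i, h1, h2, CharTwo.add_self_eq_zero]
  · rcases eq_or_ne i v with rfl | hi
    · by_cases h1 : G.Adj u j <;> by_cases h2 : G.Adj i j <;>
        simp [adjMat, relMutation, hj, hj.symm, h1, h2, CharTwo.add_self_eq_zero]
    · rcases eq_or_ne i j with rfl | hij <;> simp [adjMat, relMutation, *]

lemma rank_adjMat_relMutation {n : ℕ} (G : SimpleGraph (Fin n)) {v u : Fin n} (hvu : v ≠ u) :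
    (adjMat (relMutation G v u)).rank = (adjMat G).rank := by
  rw [adjMat_relMutation, rank_mul_eq_left_of_isUnit_det _ _ (by simp [hvu.symm]),
    rank_mul_eq_right_of_isUnit_det _ _ (by simp [hvu])]

lemma rank_adjMat_foldl_relMutation {n : ℕ} (G : SimpleGraph (Fin n)) (l : List (Fin n × Fin n))
    (hl : ∀ p ∈ l, p.1 ≠ p.2) :
    (adjMat (l.foldl (fun H p => relMutation H p.1 p.2) G)).rank = (adjMat G).rank := by
  induction l generalizing G with
  | nil => rfl
  | cons p l ih =>
    rw [List.foldl_cons, ih _ fun q hq => hl q (List.mem_cons_of_mem p hq),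
      rank_adjMat_relMutation G (hl p List.mem_cons_self)]

lemma rank_adjMat_congr {n m : ℕ} {G : SimpleGraph (Fin n)} {H : SimpleGraph (Fin m)}
    (e : G ≃g H) : (adjMat G).rank = (adjMat H).rank := by
  have : adjMat G = (adjMat H).submatrix e.toEquiv e.toEquiv := by
    ext i j
    simp [adjMat, e.map_adj_iff]
  rw [this, rank_submatrix]

def pairPartner (a b : ℕ) (i : Fin (2 * a + b)) : Fin (2 * a + b) :=
  if h : (i : ℕ) < 2 * a then
    ⟨if (i : ℕ) % 2 = 0 then i + 1 else i - 1, by split <;> omega⟩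
  else i

lemma pairPartner_val (a b : ℕ) (i : Fin (2 * a + b)) :
    (pairPartner a b i : ℕ) =
      if (i : ℕ) < 2 * a then (if (i : ℕ) % 2 = 0 then (i : ℕ) + 1 else i - 1) else i := by
  unfold pairPartner
  split_ifs <;> rfl

lemma pairPartner_involutive (a b : ℕ) : Function.Involutive (pairPartner a b) := by
  intro i
  ext
  rw [pairPartner_val, pairPartner_val]
  split_ifs <;> omega

lemma pairGraph_adj_iff {a b : ℕ} {i j : Fin (2 * a + b)} :
    (pairGraph a b).Adj i j ↔ pairPartner a b i = j ∧ (j : ℕ) < 2 * a := by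
  simp only [pairGraph, Fin.ext_iff, pairPartner_val, ne_eq]
  split_ifs <;> omega

lemma rank_adjMat_pairGraph (a b : ℕ) : (adjMat (pairGraph a b)).rank = 2 * a := by
  let w : Fin (2 * a + b) → ZMod 2 := fun j => if (j : ℕ) < 2 * a then 1 else 0
  have : adjMat (pairGraph a b) =
      (diagonal w).submatrix (pairPartner_involutive a b).toPerm (Equiv.refl _) := by
    ext i j
    by_cases h : pairPartner a b i = j <;> simp [adjMat, pairGraph_adj_iff, w, h]
  rw [this, rank_submatrix, rank_diagonal, Fintype.card_subtype]
  simp [w, Fin.card_filter_val_lt]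

section KernelOfX

variable {n : ℕ} {G : SimpleGraph (Fin n)} {u : Fin n}

def sumCoords : Module.Dual (ZMod 2) (Fin n → ZMod 2) := ∑ i, LinearMap.proj i

@[simp] lemma sumCoords_apply (y : Fin n → ZMod 2) : sumCoords y = ∑ i, y i := by
  simp [sumCoords]

lemma Xmat_mulVec_castSucc (x : Fin (n + 1) → ZMod 2) (i : Fin n) :
    (Xmat G *ᵥ x) i.castSucc = (adjMat G *ᵥ Fin.init x) i + x (Fin.last n) := by
  simp [mulVec, dotProduct, Fin.sum_univ_castSucc, Xmat, Fin.init]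

lemma Xmat_mulVec_last (x : Fin (n + 1) → ZMod 2) :
    (Xmat G *ᵥ x) (Fin.last n) = sumCoords (Fin.init x) := by
  simp [mulVec, dotProduct, Fin.sum_univ_castSucc, Xmat, Fin.init]

lemma adjMat_mulVec_apply_of_isIsolated (hu : isIsolated G u) (y : Fin n → ZMod 2) :
    (adjMat G *ᵥ y) u = 0 := by
  simp [mulVec, dotProduct, adjMat, hu _]

lemma adjMat_mulVec_single_of_isIsolated (hu : isIsolated G u) :
    adjMat G *ᵥ Pi.single u 1 = 0 := by
  ext i
  have : ¬ G.Adj i u := fun h => hu i h.symm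
  simp [mulVec_single, adjMat, this]

lemma mem_ker_Xmat_iff (hu : isIsolated G u) (x : Fin (n + 1) → ZMod 2) :
    x ∈ LinearMap.ker (Xmat G).mulVecLin ↔ x (Fin.last n) = 0 ∧
      Fin.init x ∈ LinearMap.ker (adjMat G).mulVecLin ⊓ LinearMap.ker sumCoords := by
  simp only [Submodule.mem_inf, LinearMap.mem_ker, mulVecLin_apply, funext_iff,
    Fin.forall_fin_succ', Xmat_mulVec_castSucc, Xmat_mulVec_last, Pi.zero_apply]
  constructor
  · rintro ⟨hM, hs⟩
    have hlast : x (Fin.last n) = 0 := by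
      simpa [adjMat_mulVec_apply_of_isIsolated hu] using hM u
    exact ⟨hlast, fun i => by simpa [hlast] using hM i, hs⟩
  · rintro ⟨hlast, hM, hs⟩
    exact ⟨fun i => by simp [hlast, hM i], hs⟩

lemma map_init_ker_Xmat (hu : isIsolated G u) :
    (LinearMap.ker (Xmat G).mulVecLin).map (LinearMap.funLeft (ZMod 2) (ZMod 2) Fin.castSucc) =
      LinearMap.ker (adjMat G).mulVecLin ⊓ LinearMap.ker sumCoords := by
  ext y
  simp only [Submodule.mem_map]
  constructor
  · rintro ⟨x, hx, rfl⟩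
    exact ((mem_ker_Xmat_iff hu x).1 hx).2
  · intro hy
    refine ⟨Fin.snoc y 0, (mem_ker_Xmat_iff hu _).2 ⟨by simp, by rwa [Fin.init_snoc]⟩, ?_⟩
    ext i
    simp [LinearMap.funLeft_apply]

lemma finrank_ker_Xmat (hu : isIsolated G u) :
    Module.finrank (ZMod 2) (LinearMap.ker (Xmat G).mulVecLin) =
      Module.finrank (ZMod 2)
        ↥(LinearMap.ker (adjMat G).mulVecLin ⊓ LinearMap.ker sumCoords) := by
  conv_rhs => rw [← map_init_ker_Xmat hu, ← Submodule.range_subtype (LinearMap.ker _),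
    ← LinearMap.range_comp]
  rw [LinearMap.finrank_range_of_inj]
  rw [← LinearMap.ker_eq_bot, LinearMap.ker_eq_bot']
  rintro ⟨x, hx⟩ hinit
  have hlast := ((mem_ker_Xmat_iff hu x).1 hx).1
  ext i
  refine Fin.lastCases hlast (fun j => ?_) i
  exact congrFun hinit j

lemma finrank_ker_adjMat_inf_ker_sumCoords_add_one (hu : isIsolated G u) :
    Module.finrank (ZMod 2)
        ↥(LinearMap.ker (adjMat G).mulVecLin ⊓ LinearMap.ker sumCoords) + 1 =
      Module.finrank (ZMod 2) (LinearMap.ker (adjMat G).mulVecLin) := by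
  have hsu : sumCoords (Pi.single u 1) = 1 := by simp
  have hs : sumCoords ≠ 0 := fun h => zero_ne_one (by rwa [h, LinearMap.zero_apply] at hsu)
  have hsup : LinearMap.ker (adjMat G).mulVecLin ⊔ LinearMap.ker sumCoords = ⊤ := by
    refine eq_top_iff.2 fun y _ => ?_
    have hy : y = sumCoords y • Pi.single u 1 + (y - sumCoords y • Pi.single u 1) := by abel
    rw [hy]
    refine Submodule.add_mem_sup ?_ ?_
    · simp [adjMat_mulVec_single_of_isIsolated hu]
    · simp only [LinearMap.mem_ker, map_sub, map_smul, hsu, smul_eq_mul, mul_one, sub_self]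
  have hdim := Submodule.finrank_sup_add_finrank_inf_eq
    (LinearMap.ker (adjMat G).mulVecLin) (LinearMap.ker sumCoords)
  have hker := sumCoords.finrank_ker_add_one_of_ne_zero hs
  rw [hsup, finrank_top] at hdim
  omega

lemma rank_Xmat_of_isIsolated (hu : isIsolated G u) : (Xmat G).rank = (adjMat G).rank + 2 := by
  have hX := LinearMap.finrank_range_add_finrank_ker (Xmat G).mulVecLin
  have hM := LinearMap.finrank_range_add_finrank_ker (adjMat G).mulVecLin
  have hK := finrank_ker_adjMat_inf_ker_sumCoords_add_one hu
  rw [finrank_ker_Xmat hu] at hX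
  simp only [Module.finrank_fintype_fun_eq_card, Fintype.card_fin] at hX hM
  rw [Matrix.rank, Matrix.rank]
  omega

end KernelOfX

theorem stmt_9_general {n : ℕ} (G : SimpleGraph (Fin n)) (hiso : ∃ u, isIsolated G u)
    (α β : ℕ) (hn : 2 * α + β = n)
    (l : List (Fin n × Fin n)) (hl : ∀ p ∈ l, p.1 ≠ p.2)
    (h : Nonempty ((l.foldl (fun H p => relMutation H p.1 p.2) G) ≃g pairGraph α β)) :
    (Xmat G).rank = 2 * α + 2 := by
  subst hn
  obtain ⟨u, hu⟩ := hiso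
  obtain ⟨e⟩ := h
  rw [rank_Xmat_of_isIsolated hu, ← rank_adjMat_foldl_relMutation G l hl, rank_adjMat_congr e,
    rank_adjMat_pairGraph]

/-- if a graph `G` on `n` vertices with an isolated vertex is transformed
by a finite sequence of relative mutations into a graph isomorphic to `G(α, β)` with
`2α + β = n`, `β > 0`, then `rank_{F_2} X(G) = 2α + 2`. -/
theorem stmt_9 {n : ℕ} (G : SimpleGraph (Fin n)) (hiso : ∃ u, isIsolated G u)
    (α β : ℕ) (hn : 2 * α + β = n) (hβ : 0 < β)
    (l : List (Fin n × Fin n)) (hl : ∀ p ∈ l, p.1 ≠ p.2)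
    (h : Nonempty ((l.foldl (fun H p => relMutation H p.1 p.2) G) ≃g pairGraph α β)) :
    (Xmat G).rank = 2 * α + 2 :=
  stmt_9_general G hiso α β hn l hl h
end

section
/- Let G be a finite simple graph containing at least one isolated vertex and assume j(G) > 0. Let {u_1, u_2} ∈ J(G) and let u_2, …, u_m be all the vertices u_i ≠ u_1 with N_G(u_1) = N_G(u_i). Let G' = μ_{u_m←u_1}(⋯ μ_{u_3←u_1}(μ_{u_2←u_1}(G)) ⋯). Then j(G') < j(G) and ℓ(G') ≥ ℓ(G). -/
open Classical Finset

/-!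
The vertices `u₂, …, uₘ` are twins of `u₁` (same neighbourhood), so each relative mutation
`μ_{uᵢ←u₁}` just deletes the edges at `uᵢ`: `G'` is `G` with `u₂, …, uₘ` made isolated. Two
vertices outside `{u₂, …, uₘ}` are twins in `G'` iff they are twins in `G`, since the deleted
vertices are seen exactly like `u₁`. Hence `J(G') ⊆ J(G)`, and `{u₁, u₂}` drops out.
With an isolated vertex `u` around, `ℓ` counts pairs of twins; going from `G` to `G'` loses at
most the pairs `{u₁, uᵢ}` and gains the pairs `{u, uᵢ}`.
-/

open SimpleGraph

section Mutation

variable {V : Type*}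

theorem relMutation_eq_deleteIncidenceSet {G : SimpleGraph V} {v u : V}
    (h : G.neighborSet v = G.neighborSet u) : relMutation G v u = G.deleteIncidenceSet v := by
  have huv : ∀ w, G.Adj u w ↔ G.Adj v w := fun w => by simpa using (Set.ext_iff.mp h w).symm
  ext a b
  simp only [relMutation, deleteIncidenceSet_adj, huv]
  constructor
  · rintro ⟨-, ⟨-, h⟩ | ⟨-, h⟩ | h⟩ <;> tauto
  · rintro ⟨hab, ha, hb⟩
    exact ⟨hab.ne, Or.inr (Or.inr ⟨ha, hb, hab⟩)⟩

theorem neighborSet_deleteIncidenceSet_of_ne (G : SimpleGraph V) {x y : V} (h : y ≠ x) :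
    (G.deleteIncidenceSet x).neighborSet y = G.neighborSet y \ {x} := by
  ext w
  simp [deleteIncidenceSet_adj, h]

theorem foldl_relMutation_eq_foldl_deleteIncidenceSet {u : V} :
    ∀ {l : List V} {G : SimpleGraph V}, (u :: l).Nodup →
      (∀ x ∈ l, G.neighborSet x = G.neighborSet u) →
      l.foldl (fun H x => relMutation H x u) G = l.foldl (fun H x => H.deleteIncidenceSet x) G
  | [], _, _, _ => rfl
  | x :: l, G, hnd, hl => by
    simp only [List.nodup_cons, List.mem_cons, not_or] at hnd
    obtain ⟨⟨hux, hul⟩, hxl, hlnd⟩ := hnd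
    rw [List.foldl_cons, List.foldl_cons, relMutation_eq_deleteIncidenceSet (hl x (by simp))]
    refine foldl_relMutation_eq_foldl_deleteIncidenceSet (List.nodup_cons.mpr ⟨hul, hlnd⟩) ?_
    intro y hy
    have hyx : y ≠ x := ne_of_mem_of_not_mem hy hxl
    rw [neighborSet_deleteIncidenceSet_of_ne G hyx, neighborSet_deleteIncidenceSet_of_ne G hux,
      hl y (List.mem_cons_of_mem x hy)]

theorem foldl_deleteIncidenceSet_adj (l : List V) (G : SimpleGraph V) {a b : V} :
    (l.foldl (fun H x => H.deleteIncidenceSet x) G).Adj a b ↔ G.Adj a b ∧ a ∉ l ∧ b ∉ l := by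
  induction l generalizing G with
  | nil => simp
  | cons x l ih =>
    simp only [List.foldl_cons, ih, deleteIncidenceSet_adj, List.mem_cons]
    tauto

end Mutation

section Twins

variable {V : Type*} {G G' : SimpleGraph V} {s : Finset V}

theorem isIsolated_iff_neighborSet_eq_empty {H : SimpleGraph V} {v : V} :
    isIsolated H v ↔ H.neighborSet v = ∅ := by
  simp [isIsolated, Set.eq_empty_iff_forall_notMem]

theorem neighborSet_eq_empty_of_mem (hG' : ∀ a b, G'.Adj a b ↔ G.Adj a b ∧ a ∉ s ∧ b ∉ s)
    {x : V} (hx : x ∈ s) : G'.neighborSet x = ∅ := by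
  ext w
  simp [hG', hx]

theorem isIsolated_of_adj_iff (hG' : ∀ a b, G'.Adj a b ↔ G.Adj a b ∧ a ∉ s ∧ b ∉ s) {u : V}
    (hu : isIsolated G u) : isIsolated G' u :=
  fun w h => hu w ((hG' u w).mp h).1

theorem neighborSet_eq_iff_of_adj_iff (hG' : ∀ a b, G'.Adj a b ↔ G.Adj a b ∧ a ∉ s ∧ b ∉ s)
    {u : V} (hu : u ∉ s) (hs : ∀ x ∈ s, G.neighborSet x = G.neighborSet u) {v w : V}
    (hv : v ∉ s) (hw : w ∉ s) :
    G'.neighborSet v = G'.neighborSet w ↔ G.neighborSet v = G.neighborSet w := by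
  simp only [Set.ext_iff, mem_neighborSet, hG', hv, hw, not_false_eq_true, true_and]
  refine ⟨fun h k => ?_, fun h k => and_congr_left fun _ => h k⟩
  by_cases hk : k ∈ s
  · -- a vertex of `s` is seen exactly by the neighbours of `u`, which lies outside `s`
    have hku : ∀ z, G.Adj z k ↔ G.Adj z u := fun z => by
      simpa [adj_comm] using Set.ext_iff.mp (hs k hk) z
    simpa [hku, hu] using h u
  · simpa [hk] using h k

end Twins

section Ell

variable {V : Type*}

theorem evenTriple_iff (H : SimpleGraph V) (i j k : V) :
    evenTriple H i j k ↔ (H.Adj i j ↔ ¬ (H.Adj i k ↔ H.Adj j k)) := by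
  unfold evenTriple
  by_cases hij : H.Adj i j <;> by_cases hik : H.Adj i k <;> by_cases hjk : H.Adj j k <;>
    simp [hij, hik, hjk, Nat.odd_iff]

theorem forall_evenTriple_iff_neighborSet_eq {H : SimpleGraph V} {v : V} (hv : isIsolated H v)
    {i j : V} :
    (∀ k, k ≠ i → k ≠ j → evenTriple H i j k) ↔ H.neighborSet i = H.neighborSet j := by
  simp only [evenTriple_iff, Set.ext_iff, mem_neighborSet]
  constructor
  · intro h
    -- the triple `{i, j, v}` forces `i` and `j` to be non-adjacent
    have hij : ¬ H.Adj i j := fun hij =>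
      (h v (fun hvi => hv j (hvi ▸ hij)) (fun hvj => hv i (hvj ▸ hij.symm))).mp hij
        (iff_of_false (fun h' => hv i h'.symm) (fun h' => hv j h'.symm))
    intro k
    by_cases hki : k = i
    · subst hki; simpa using fun h' => hij h'.symm
    by_cases hkj : k = j
    · subst hkj; simpa using hij
    simpa [hij] using h k hki hkj
  · intro h k _ _
    have hij : ¬ H.Adj i j := fun hij => H.loopless.irrefl j ((h j).mp hij)
    simp [hij, h k]

end Ell

section OrderedPairs

variable {V : Type*} [LinearOrder V]

theorem min_lt_max_and_iff {P : V → V → Prop} (hP : ∀ a b, P a b → P b a) {a b : V} :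
    (min a b < max a b ∧ P (min a b) (max a b)) ↔ a ≠ b ∧ P a b := by
  rcases le_total a b with h | h
  · simp [h, lt_iff_le_and_ne]
  · simp only [h, min_eq_right, max_eq_left, lt_iff_le_and_ne, true_and, ne_comm]
    exact and_congr_right fun _ => ⟨hP _ _, hP _ _⟩

theorem min_max_injOn (a : V) :
    Set.InjOn (fun x => (min a x, max a x)) {x | x ≠ a} := by
  intro x hx y hy hxy
  simp only [Prod.mk.injEq] at hxy
  rcases le_total a x with h | h <;> rcases le_total a y with h' | h' <;> simp_all

end OrderedPairs

section TwinPairs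

variable {V : Type*} [Fintype V] [LinearOrder V]

noncomputable def twinPairs (H : SimpleGraph V) : Finset (V × V) :=
  univ.filter fun p => p.1 < p.2 ∧ H.neighborSet p.1 = H.neighborSet p.2

theorem mem_twinPairs {H : SimpleGraph V} {p : V × V} :
    p ∈ twinPairs H ↔ p.1 < p.2 ∧ H.neighborSet p.1 = H.neighborSet p.2 := by
  simp [twinPairs]

theorem min_max_mem_twinPairs {H : SimpleGraph V} {a b : V} :
    (min a b, max a b) ∈ twinPairs H ↔ a ≠ b ∧ H.neighborSet a = H.neighborSet b :=
  mem_twinPairs.trans (min_lt_max_and_iff (P := fun a b => H.neighborSet a = H.neighborSet b)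
    fun _ _ => Eq.symm)

theorem ell_eq_card_twinPairs {n : ℕ} {H : SimpleGraph (Fin n)} {v : Fin n}
    (hv : isIsolated H v) : ell H = #(twinPairs H) :=
  congrArg card <| filter_congr fun _ _ =>
    and_congr_right fun _ => forall_evenTriple_iff_neighborSet_eq hv

end TwinPairs

section Isolating

variable {V : Type*} {G G' : SimpleGraph V} {s : Finset V} {u1 : V}

theorem eq_of_neighborSet_eq_of_mem_of_notMem
    (hclass : ∀ w, w ≠ u1 → (G.neighborSet w = G.neighborSet u1 ↔ w ∈ s)) (hu1 : u1 ∉ s)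
    {a b : V} (hab : G.neighborSet a = G.neighborSet b) (ha : a ∈ s) (hb : b ∉ s) : b = u1 := by
  by_contra hb1
  exact hb ((hclass b hb1).mp (hab.symm.trans ((hclass a (ne_of_mem_of_not_mem ha hu1)).mpr ha)))

variable [Fintype V] [LinearOrder V]

theorem twinPairs_sdiff_subset (hG' : ∀ a b, G'.Adj a b ↔ G.Adj a b ∧ a ∉ s ∧ b ∉ s)
    (hu1 : u1 ∉ s) (hclass : ∀ w, w ≠ u1 → (G.neighborSet w = G.neighborSet u1 ↔ w ∈ s)) :
    twinPairs G \ s.image (fun x => (min u1 x, max u1 x)) ⊆ twinPairs G' := by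
  have hs : ∀ x ∈ s, G.neighborSet x = G.neighborSet u1 := fun x hx =>
    (hclass x (ne_of_mem_of_not_mem hx hu1)).mpr hx
  intro p hp
  simp only [mem_sdiff, mem_twinPairs, mem_image, not_exists, not_and] at hp
  obtain ⟨⟨hlt, hN⟩, hnot⟩ := hp
  refine mem_twinPairs.mpr ⟨hlt, ?_⟩
  by_cases h1 : p.1 ∈ s <;> by_cases h2 : p.2 ∈ s
  · rw [neighborSet_eq_empty_of_mem hG' h1, neighborSet_eq_empty_of_mem hG' h2]
  · have h2u1 := eq_of_neighborSet_eq_of_mem_of_notMem hclass hu1 hN h1 h2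
    refine absurd ?_ (hnot p.1 h1)
    simp [← h2u1, hlt.le]
  · have h1u1 := eq_of_neighborSet_eq_of_mem_of_notMem hclass hu1 hN.symm h2 h1
    refine absurd ?_ (hnot p.2 h2)
    simp [← h1u1, hlt.le]
  · exact (neighborSet_eq_iff_of_adj_iff hG' hu1 hs h1 h2).mpr hN

theorem card_twinPairs_le_of_adj_iff (hG' : ∀ a b, G'.Adj a b ↔ G.Adj a b ∧ a ∉ s ∧ b ∉ s)
    (hu1 : u1 ∉ s) (hclass : ∀ w, w ≠ u1 → (G.neighborSet w = G.neighborSet u1 ↔ w ∈ s))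
    (hne : G.neighborSet u1 ≠ ∅) {u : V} (hu : isIsolated G u) :
    #(twinPairs G) ≤ #(twinPairs G') := by
  have hs : ∀ x ∈ s, G.neighborSet x = G.neighborSet u1 := fun x hx =>
    (hclass x (ne_of_mem_of_not_mem hx hu1)).mpr hx
  have hNu : G.neighborSet u = ∅ := isIsolated_iff_neighborSet_eq_empty.mp hu
  have hus : u ∉ s := fun h => hne ((hs u h).symm.trans hNu)
  have hN'u : G'.neighborSet u = ∅ :=
    isIsolated_iff_neighborSet_eq_empty.mp (isIsolated_of_adj_iff hG' hu)
  -- the pairs `{u₁, x}`, `x ∈ s`, stop being twins; the pairs `{u, x}` become twins instead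
  set L₁ := s.image fun x => (min u1 x, max u1 x)
  set L := s.image fun x => (min u x, max u x)
  have hL_card : #L = #s := card_image_of_injOn fun x hx y hy =>
    min_max_injOn u (ne_of_mem_of_not_mem hx hus) (ne_of_mem_of_not_mem hy hus)
  have hL_sub : L ⊆ twinPairs G' := by
    simp only [L, image_subset_iff, min_max_mem_twinPairs]
    exact fun x hx => ⟨(ne_of_mem_of_not_mem hx hus).symm,
      hN'u.trans (neighborSet_eq_empty_of_mem hG' hx).symm⟩
  have hL_disj : Disjoint (twinPairs G \ L₁) L := by
    refine disjoint_right.mpr fun p hp hpG => ?_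
    obtain ⟨x, hx, rfl⟩ := mem_image.mp hp
    exact hne ((hs x hx).symm.trans
      ((min_max_mem_twinPairs.mp (mem_sdiff.mp hpG).1).2.symm.trans hNu))
  calc #(twinPairs G) ≤ #(twinPairs G \ L₁) + #L₁ := card_le_card_sdiff_add_card
    _ ≤ #(twinPairs G \ L₁) + #L := by rw [hL_card]; gcongr; exact card_image_le
    _ = #(twinPairs G \ L₁ ∪ L) := (card_union_of_disjoint hL_disj).symm
    _ ≤ #(twinPairs G') :=
      card_le_card (union_subset (twinPairs_sdiff_subset hG' hu1 hclass) hL_sub)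

end Isolating

section Jfinset

variable {n : ℕ} {G G' : SimpleGraph (Fin n)} {s : Finset (Fin n)} {u1 : Fin n}

theorem min_max_mem_Jfinset {H : SimpleGraph (Fin n)} {a b : Fin n} :
    (min a b, max a b) ∈ Jfinset H ↔
      a ≠ b ∧ H.neighborSet a = H.neighborSet b ∧ H.neighborSet a ≠ ∅ := by
  simp only [Jfinset, mem_filter, mem_univ, true_and]
  exact min_lt_max_and_iff (P := fun a b => H.neighborSet a = H.neighborSet b ∧
    H.neighborSet a ≠ ∅) fun _ _ h => ⟨h.1.symm, h.1 ▸ h.2⟩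

theorem Jfinset_subset_of_adj_iff (hG' : ∀ a b, G'.Adj a b ↔ G.Adj a b ∧ a ∉ s ∧ b ∉ s)
    (hu1 : u1 ∉ s) (hs : ∀ x ∈ s, G.neighborSet x = G.neighborSet u1) :
    Jfinset G' ⊆ Jfinset G := by
  intro p hp
  simp only [Jfinset, mem_filter, mem_univ, true_and] at hp ⊢
  obtain ⟨hlt, hN, hne⟩ := hp
  have h1 : p.1 ∉ s := fun h => hne (neighborSet_eq_empty_of_mem hG' h)
  have h2 : p.2 ∉ s := fun h => hne (hN.trans (neighborSet_eq_empty_of_mem hG' h))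
  obtain ⟨w, hw⟩ := Set.nonempty_iff_ne_empty.mpr hne
  exact ⟨hlt, (neighborSet_eq_iff_of_adj_iff hG' hu1 hs h1 h2).mp hN,
    Set.nonempty_iff_ne_empty.mp ⟨w, ((hG' _ _).mp hw).1⟩⟩

theorem jnum_lt_of_adj_iff (hG' : ∀ a b, G'.Adj a b ↔ G.Adj a b ∧ a ∉ s ∧ b ∉ s)
    (hu1 : u1 ∉ s) (hs : ∀ x ∈ s, G.neighborSet x = G.neighborSet u1) {u2 : Fin n}
    (hu2 : u2 ∈ s) (hne : G.neighborSet u1 ≠ ∅) : jnum G' < jnum G := by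
  refine card_lt_card ((Jfinset_subset_of_adj_iff hG' hu1 hs).ssubset_of_not_subset fun h => ?_)
  have hmem : (min u1 u2, max u1 u2) ∈ Jfinset G :=
    min_max_mem_Jfinset.mpr ⟨(ne_of_mem_of_not_mem hu2 hu1).symm, (hs u2 hu2).symm, hne⟩
  obtain ⟨-, hN, -⟩ := min_max_mem_Jfinset.mp (h hmem)
  obtain ⟨w, hw⟩ := Set.nonempty_iff_ne_empty.mpr hne
  have hws : w ∉ s := fun h => G.loopless.irrefl w (show w ∈ G.neighborSet w from hs w h ▸ hw)
  have hw' : w ∈ G'.neighborSet u1 := (hG' u1 w).mpr ⟨hw, hu1, hws⟩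
  rwa [hN, neighborSet_eq_empty_of_mem hG' hu2] at hw'

end Jfinset

theorem stmt_16_general {n : ℕ} (G : SimpleGraph (Fin n)) (hiso : ∃ u, isIsolated G u)
    (u1 : Fin n) (l : List (Fin n)) (hl : l ≠ [])
    (hnodup : (u1 :: l).Nodup) (hne : G.neighborSet u1 ≠ ∅)
    (hall : ∀ w : Fin n, w ≠ u1 →
      (G.neighborSet w = G.neighborSet u1 ↔ w ∈ l)) :
    jnum (l.foldl (fun H x => relMutation H x u1) G) < jnum G ∧
    ell G ≤ ell (l.foldl (fun H x => relMutation H x u1) G) := by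
  obtain ⟨u, hu⟩ := hiso
  obtain ⟨u2, hu2⟩ := List.exists_mem_of_ne_nil l hl
  have hu1 : u1 ∉ l.toFinset := by simpa using (List.nodup_cons.mp hnodup).1
  have hclass : ∀ w, w ≠ u1 → (G.neighborSet w = G.neighborSet u1 ↔ w ∈ l.toFinset) := by
    simpa using hall
  have hs : ∀ x ∈ l, G.neighborSet x = G.neighborSet u1 := fun x hx =>
    (hall x (ne_of_mem_of_not_mem hx (List.nodup_cons.mp hnodup).1)).mpr hx
  set G' := l.foldl (fun H x => relMutation H x u1) G
  have hG' : ∀ a b, G'.Adj a b ↔ G.Adj a b ∧ a ∉ l.toFinset ∧ b ∉ l.toFinset := fun a b => by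
    simpa [G', foldl_relMutation_eq_foldl_deleteIncidenceSet hnodup hs] using
      foldl_deleteIncidenceSet_adj l G
  refine ⟨jnum_lt_of_adj_iff hG' hu1 (by simpa using hs) (List.mem_toFinset.mpr hu2) hne, ?_⟩
  rw [ell_eq_card_twinPairs hu, ell_eq_card_twinPairs (isIsolated_of_adj_iff hG' hu)]
  exact card_twinPairs_le_of_adj_iff hG' hu1 hclass hne hu

/-- let `G` contain an isolated vertex, `j(G) > 0`, let `u₁` be a vertex
and `l = [u₂, …, uₘ]` (nonempty, no repetitions, not containing `u₁`) consist of all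
vertices `≠ u₁` whose neighborhood equals `N_G(u₁) ≠ ∅` (so `{u₁, u₂} ∈ J(G)`), and
let `G' = μ_{uₘ←u₁}(⋯ μ_{u₂←u₁}(G) ⋯)`. Then `j(G') < j(G)` and `ℓ(G') ≥ ℓ(G)`. -/
theorem stmt_16 {n : ℕ} (G : SimpleGraph (Fin n)) (hiso : ∃ u, isIsolated G u)
    (hj : 0 < jnum G) (u1 : Fin n) (l : List (Fin n)) (hl : l ≠ [])
    (hnodup : (u1 :: l).Nodup) (hne : G.neighborSet u1 ≠ ∅)
    (hall : ∀ w : Fin n, w ≠ u1 →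
      (G.neighborSet w = G.neighborSet u1 ↔ w ∈ l)) :
    jnum (l.foldl (fun H x => relMutation H x u1) G) < jnum G ∧
    ell G ≤ ell (l.foldl (fun H x => relMutation H x u1) G) :=
  stmt_16_general G hiso u1 l hl hnodup hne hall
end

section
/- Let G be a finite simple graph containing at least one isolated vertex and assume j(G) > 0. Let {u_1, u_2} ∈ J(G) and let u_2, …, u_m be all the vertices u_i ≠ u_1 with N_G(u_1) = N_G(u_i). Let G' = μ_{u_m←u_1}(⋯ μ_{u_3←u_1}(μ_{u_2←u_1}(G)) ⋯). Then the vertices u_2, …, u_m are isolated in G', the number of isolated vertices satisfies i(G') = i(G) + m − 1, and J(G') = J(G) \ { {u_i, u_j} : 1 ≤ i < j ≤ m }. -/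
open Classical Finset

/-! Each `u_i` (`i ≥ 2`) is a twin of `u₁`: they have the same neighbours. Relative mutation at a
twin of `u₁` w.r.t. `u₁` replaces its neighbourhood by `N(u₁) Δ N(u_i) = ∅`, i.e. it just deletes
the edges at `u_i`, and deleting edges at `u_j` keeps `u_i` and `u₁` twins. So `G'` is `G` with
all edges at `u₂, …, uₘ` removed. These vertices were not isolated (their common neighbourhood is
nonempty), which gives `i(G') = i(G) + m - 1`; and since `{u₁, …, uₘ}` is a whole twin class of
`G`, twin pairs outside it are unaffected, while pairs inside it are destroyed. -/

namespace SimpleGraph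

variable {V : Type*} (G : SimpleGraph V)

def isolate (s : Set V) : SimpleGraph V where
  Adj x y := G.Adj x y ∧ x ∉ s ∧ y ∉ s
  symm := ⟨fun _ _ ⟨h, hx, hy⟩ => ⟨h.symm, hy, hx⟩⟩
  loopless := ⟨fun _ ⟨h, _⟩ => h.ne rfl⟩

variable {G}

@[simp]
lemma isolate_adj {s : Set V} {x y : V} : (G.isolate s).Adj x y ↔ G.Adj x y ∧ x ∉ s ∧ y ∉ s :=
  Iff.rfl

@[simp]
lemma isolate_empty : G.isolate ∅ = G := by
  ext; simp

lemma isolate_deleteIncidenceSet (v : V) (s : Set V) :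
    (G.deleteIncidenceSet v).isolate s = G.isolate (insert v s) := by
  ext; simp [deleteIncidenceSet_adj]; tauto

lemma relMutation_eq_deleteIncidenceSet {v u : V} (h : ∀ w, G.Adj v w ↔ G.Adj u w) :
    relMutation G v u = G.deleteIncidenceSet v := by
  ext x y
  have hx := h x
  have hy := h y
  simp only [relMutation, deleteIncidenceSet_adj]
  constructor
  · rintro ⟨-, ⟨rfl, hiff⟩ | ⟨rfl, hiff⟩ | ⟨hx, hy, hadj⟩⟩
    · tauto
    · tauto
    · exact ⟨hadj, hx, hy⟩
  · rintro ⟨hadj, hx, hy⟩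
    exact ⟨hadj.ne, .inr (.inr ⟨hx, hy, hadj⟩)⟩

lemma foldl_relMutation_eq_isolate {u : V} {l : List V} (hu : u ∉ l) (hl : l.Nodup)
    (h : ∀ y ∈ l, ∀ w, G.Adj y w ↔ G.Adj u w) :
    l.foldl (fun H y => relMutation H y u) G = G.isolate {x | x ∈ l} := by
  induction l generalizing G with
  | nil => simp
  | cons y t ih =>
    obtain ⟨hyt, ht⟩ := List.nodup_cons.mp hl
    have huy : u ≠ y := fun h => hu (h ▸ List.mem_cons_self)
    have hut : u ∉ t := fun h => hu (List.mem_cons_of_mem y h)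
    rw [List.foldl_cons, relMutation_eq_deleteIncidenceSet (h y List.mem_cons_self)]
    rw [ih hut ht fun z hz w => ?_, isolate_deleteIncidenceSet]
    · congr 1; ext; simp
    have hzy : z ≠ y := fun h => hyt (h ▸ hz)
    simp [deleteIncidenceSet_adj, h z (List.mem_cons_of_mem y hz), hzy, huy]

lemma isIsolated_isolate_of_mem {s : Set V} {v : V} (hv : v ∈ s) : isIsolated (G.isolate s) v :=
  fun _ h => h.2.1 hv

section Twins

variable {u : V} {s : Set V} (hu : u ∉ s) (hs : ∀ y ∈ s, ∀ w, G.Adj y w ↔ G.Adj u w)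
include hu hs

lemma isIsolated_isolate_iff {v : V} : isIsolated (G.isolate s) v ↔ v ∈ s ∨ isIsolated G v := by
  refine ⟨fun h => or_iff_not_imp_left.mpr fun hv w hvw => ?_, ?_⟩
  · by_cases hw : w ∈ s
    -- a neighbour `w ∈ s` of `v` makes `u`, which survives, a neighbour of `v`
    · exact h u ⟨(G.adj_comm _ _).mp ((hs w hw v).mp hvw.symm), hv, hu⟩
    · exact h w ⟨hvw, hv, hw⟩
  · rintro (hv | hv) w hvw
    exacts [hvw.2.1 hv, hv w hvw.1]

lemma adj_iff_adj_isolate_iff {i j : V} (hi : i ∉ s) (hj : j ∉ s) :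
    (∀ w, (G.isolate s).Adj i w ↔ (G.isolate s).Adj j w) ↔ ∀ w, G.Adj i w ↔ G.Adj j w := by
  refine ⟨fun h w => ?_, fun h w => by simp [h w, hi, hj]⟩
  by_cases hw : w ∈ s
  · have hiu : G.Adj i u ↔ G.Adj j u := by simpa [hi, hj, hu] using h u
    rw [G.adj_comm i, G.adj_comm j, hs w hw, hs w hw, G.adj_comm u, G.adj_comm u, hiu]
  · simpa [hi, hj, hw] using h w

end Twins

end SimpleGraph

open SimpleGraph

section Jfinset

variable {n : ℕ} {G : SimpleGraph (Fin n)}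

lemma mem_Jfinset_iff {p : Fin n × Fin n} :
    p ∈ Jfinset G ↔ p.1 < p.2 ∧ (∀ w, G.Adj p.1 w ↔ G.Adj p.2 w) ∧ ¬ isIsolated G p.1 := by
  simp [Jfinset, isIsolated, Set.ext_iff]

lemma numIso_isolate {u : Fin n} {s : Finset (Fin n)} (hu : u ∉ s)
    (hs : ∀ y ∈ s, ∀ w, G.Adj y w ↔ G.Adj u w) (hu' : ¬ isIsolated G u) :
    numIso (G.isolate s) = numIso G + s.card := by
  have hdisj : Disjoint ((univ : Finset (Fin n)).filter (isIsolated G)) s :=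
    disjoint_left.mpr fun v hv hvs => hu' fun w huw =>
      (mem_filter.mp hv).2 w ((hs v hvs w).mpr huw)
  unfold numIso
  rw [← card_union_of_disjoint hdisj]
  congr 1
  ext v
  simp [isIsolated_isolate_iff (s := ↑s) hu fun y hy => hs y hy, or_comm]

lemma mem_Jfinset_isolate_iff {u : Fin n} {s : Set (Fin n)} (hu : u ∉ s)
    (hs : ∀ w, w ∈ insert u s ↔ ∀ x, G.Adj w x ↔ G.Adj u x) (p : Fin n × Fin n) :
    p ∈ Jfinset (G.isolate s) ↔ p ∈ Jfinset G ∧ ¬(p.1 ∈ insert u s ∧ p.2 ∈ insert u s) := by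
  have hs' : ∀ y ∈ s, ∀ w, G.Adj y w ↔ G.Adj u w := fun y hy => (hs y).mp (.inr hy)
  obtain ⟨i, j⟩ := p
  simp only [mem_Jfinset_iff]
  constructor
  · rintro ⟨hij, htwin, hi'⟩
    obtain ⟨hi, hGi⟩ := not_or.mp ((isIsolated_isolate_iff hu hs').not.mp hi')
    obtain ⟨w, hiw⟩ : ∃ w, (G.isolate s).Adj i w := by simpa [isIsolated] using hi'
    have hj : j ∉ s := ((htwin w).mp hiw).2.1
    refine ⟨⟨hij, (adj_iff_adj_isolate_iff hu hs' hi hj).mp htwin, hGi⟩, ?_⟩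
    rintro ⟨rfl | hi'', rfl | hj''⟩
    exacts [hij.ne rfl, hj hj'', hi hi'', hi hi'']
  · rintro ⟨⟨hij, htwin, hGi⟩, hnot⟩
    have hclass : i ∈ insert u s ↔ j ∈ insert u s := by
      rw [hs, hs]
      exact forall_congr' fun x => by rw [htwin x]
    have hi : i ∉ insert u s := fun hi => hnot ⟨hi, hclass.mp hi⟩
    have hj : j ∉ insert u s := fun hj => hnot ⟨hclass.mpr hj, hj⟩
    rw [Set.mem_insert_iff, not_or] at hi hj
    refine ⟨hij, (adj_iff_adj_isolate_iff hu hs' hi.2 hj.2).mpr htwin, ?_⟩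
    rw [isIsolated_isolate_iff hu hs']
    tauto

end Jfinset

theorem stmt_17_general {n : ℕ} (G : SimpleGraph (Fin n))
    (u1 : Fin n) (l : List (Fin n))
    (hnodup : (u1 :: l).Nodup) (hne : G.neighborSet u1 ≠ ∅)
    (hall : ∀ w : Fin n, w ≠ u1 →
      (G.neighborSet w = G.neighborSet u1 ↔ w ∈ l)) :
    (∀ x ∈ l, isIsolated (l.foldl (fun H y => relMutation H y u1) G) x) ∧
    numIso (l.foldl (fun H y => relMutation H y u1) G) = numIso G + l.length ∧
    (∀ p : Fin n × Fin n,
      p ∈ Jfinset (l.foldl (fun H y => relMutation H y u1) G) ↔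
        p ∈ Jfinset G ∧ ¬(p.1 ∈ u1 :: l ∧ p.2 ∈ u1 :: l)) := by
  obtain ⟨hu1, hl⟩ := List.nodup_cons.mp hnodup
  have hGu1 : ¬ isIsolated G u1 := fun h => hne (Set.eq_empty_of_forall_notMem h)
  have hclass : ∀ w, w ∈ insert u1 {x | x ∈ l} ↔ ∀ x, G.Adj w x ↔ G.Adj u1 x := by
    intro w
    by_cases hw : w = u1
    · simp [hw]
    · simp [hw, ← hall w hw, Set.ext_iff]
  have htwin : ∀ y ∈ l, ∀ w, G.Adj y w ↔ G.Adj u1 w := fun y hy => (hclass y).mp (.inr hy)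
  rw [foldl_relMutation_eq_isolate hu1 hl htwin]
  refine ⟨fun x hx => isIsolated_isolate_of_mem hx, ?_, fun p => ?_⟩
  · rw [← List.coe_toFinset, numIso_isolate (by simpa) (by simpa using htwin) hGu1,
      List.toFinset_card_of_nodup hl]
  · simpa using mem_Jfinset_isolate_iff hu1 hclass p

/-- with the setup of Statement 16 (`G'` obtained by relative mutations
`μ_{u_i←u₁}` for `i = 2, …, m`), the vertices `u₂, …, uₘ` are isolated in `G'`,
`i(G') = i(G) + m − 1`, and `J(G') = J(G) \ { {u_i, u_j} : 1 ≤ i < j ≤ m }`. -/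
theorem stmt_17 {n : ℕ} (G : SimpleGraph (Fin n)) (hiso : ∃ u, isIsolated G u)
    (hj : 0 < jnum G) (u1 : Fin n) (l : List (Fin n)) (hl : l ≠ [])
    (hnodup : (u1 :: l).Nodup) (hne : G.neighborSet u1 ≠ ∅)
    (hall : ∀ w : Fin n, w ≠ u1 →
      (G.neighborSet w = G.neighborSet u1 ↔ w ∈ l)) :
    (∀ x ∈ l, isIsolated (l.foldl (fun H y => relMutation H y u1) G) x) ∧
    numIso (l.foldl (fun H y => relMutation H y u1) G) = numIso G + l.length ∧
    (∀ p : Fin n × Fin n,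
      p ∈ Jfinset (l.foldl (fun H y => relMutation H y u1) G) ↔
        p ∈ Jfinset G ∧ ¬(p.1 ∈ u1 :: l ∧ p.2 ∈ u1 :: l)) :=
  stmt_17_general G u1 l hnodup hne hall
end
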